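/- arXiv:0709.2337 — 2 statements merged into one kernel-verified Lean document; each statement's English description precedes it below -/
import Mathlib

section
/- Let Ω = (a,b) × (c,d) ⊆ ℝ² be an open rectangle containing (x₀,t₀), ν : Ω → ℝ, and let f : Ω → ℝ be a positive twice continuously differentiable solution of f_xx − f_tt = νf on Ω. Let u : Ω → ℝ be a twice continuously differentiable solution of u_xx − u_tt = νu on Ω. Write j·f²·∂_z̄(u/f) = Φ₁ + jΦ₂ (explicitly Φ₁ = −(f²/2)∂_t(u/f), Φ₂ = (f²/2)∂_x(u/f) up to sign conventions: j·f²·½(∂_x(u/f) − j∂_t(u/f)) = (f²/2)(−∂_t(u/f) + j∂_x(u/f))), and for a real constant c define v(x,t) = −(1/f(x,t))·[2(∫_{x₀}^{x} Φ₁(η,t) dη − ∫_{t₀}^{t} Φ₂(x₀,ξ) dξ) + c]. Then W = u + jv satisfies the main Vekua equation W_z̄ = (f_z̄/f)·W̄ on Ω, and v satisfies v_xx − v_tt = ηv on Ω with η = −ν + 2(f_x² − f_t²)/f²; moreover v is unique up to an additive term c/f with c a real constant. -/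
noncomputable section

open Filter Topology MeasureTheory

/-- Hyperbolic (duplex) numbers 𝔻, modeled as pairs `(Re z, Im z)` with `j ^ 2 = 1`. -/
abbrev Hyp : Type := ℝ × ℝ

/-- Real part of a hyperbolic number. -/
def hre (a : Hyp) : ℝ := a.1

/-- Imaginary part of a hyperbolic number. -/
def him (a : Hyp) : ℝ := a.2

/-- The hyperbolic imaginary unit `j`. -/
def hj : Hyp := (0, 1)

/-- Hyperbolic multiplication: `(x+tj)(x'+t'j) = (xx'+tt') + (xt'+tx')j`. -/
def hmul (a b : Hyp) : Hyp := (a.1 * b.1 + a.2 * b.2, a.1 * b.2 + a.2 * b.1)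

/-- Hyperbolic conjugation: `conj (x+tj) = x - tj`. -/
def hconj (a : Hyp) : Hyp := (a.1, -a.2)

/-- Invertibility of a hyperbolic number: `x² ≠ t²`. -/
def IsInv (a : Hyp) : Prop := a.1 ^ 2 ≠ a.2 ^ 2

/-- Hyperbolic inverse `z⁻¹ = z̄ / |z|²` with `|z|² = x² - t²`. -/
def hinv (a : Hyp) : Hyp := (a.1 / (a.1 ^ 2 - a.2 ^ 2), -a.2 / (a.1 ^ 2 - a.2 ^ 2))

/-- Hyperbolic division. -/
def hdiv (a b : Hyp) : Hyp := hmul a (hinv b)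

/-- Partial derivative in the first (`x`) variable. -/
def pdx (g : Hyp → ℝ) (p : Hyp) : ℝ := deriv (fun s => g (s, p.2)) p.1

/-- Partial derivative in the second (`t`) variable. -/
def pdt (g : Hyp → ℝ) (p : Hyp) : ℝ := deriv (fun s => g (p.1, s)) p.2

/-- The wave operator `□g = g_xx - g_tt`. -/
def waveOp (g : Hyp → ℝ) (p : Hyp) : ℝ := pdx (pdx g) p - pdt (pdt g) p

/-- `w_z = ½(∂_x + j ∂_t) w = ½((u_x+v_t) + (v_x+u_t)j)` for a 𝔻-valued `w = u + jv`. -/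
def dz (w : Hyp → Hyp) (p : Hyp) : Hyp :=
  ((pdx (fun q => (w q).1) p + pdt (fun q => (w q).2) p) / 2,
   (pdx (fun q => (w q).2) p + pdt (fun q => (w q).1) p) / 2)

/-- `w_z̄ = ½(∂_x - j ∂_t) w = ½((u_x-v_t) + (v_x-u_t)j)` for a 𝔻-valued `w = u + jv`. -/
def dzbar (w : Hyp → Hyp) (p : Hyp) : Hyp :=
  ((pdx (fun q => (w q).1) p - pdt (fun q => (w q).2) p) / 2,
   (pdx (fun q => (w q).2) p - pdt (fun q => (w q).1) p) / 2)

/-- `f_z = ½(f_x + j f_t)` for a real-valued `f`. -/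
def rz (f : Hyp → ℝ) (p : Hyp) : Hyp := (pdx f p / 2, pdt f p / 2)

/-- `f_z̄ = ½(f_x - j f_t)` for a real-valued `f`. -/
def rzbar (f : Hyp → ℝ) (p : Hyp) : Hyp := (pdx f p / 2, -(pdt f p) / 2)

/-- 𝔻-differentiability at `z₀`: the difference quotient `(f z - f z₀)·(z - z₀)⁻¹`
tends to `d` as `z → z₀` through points with `z - z₀` invertible. -/
def HasHDerivAt (f : Hyp → Hyp) (d : Hyp) (z₀ : Hyp) : Prop :=
  Filter.Tendsto (fun z => hmul (f z - f z₀) (hinv (z - z₀)))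
    (nhdsWithin z₀ {z | IsInv (z - z₀)}) (nhds d)

/-- `F Ḡ - F̄ G`. -/
def pairDenom (F G : Hyp → Hyp) (z : Hyp) : Hyp :=
  hmul (F z) (hconj (G z)) - hmul (hconj (F z)) (G z)

/-- Characteristic coefficient `a_(F,G) = -(F̄ G_z̄ - F_z̄ Ḡ)/(F Ḡ - F̄ G)`. -/
def aFG (F G : Hyp → Hyp) (z : Hyp) : Hyp :=
  - hdiv (hmul (hconj (F z)) (dzbar G z) - hmul (dzbar F z) (hconj (G z))) (pairDenom F G z)

/-- Characteristic coefficient `b_(F,G) = (F G_z̄ - F_z̄ G)/(F Ḡ - F̄ G)`. -/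
def bFG (F G : Hyp → Hyp) (z : Hyp) : Hyp :=
  hdiv (hmul (F z) (dzbar G z) - hmul (dzbar F z) (G z)) (pairDenom F G z)

/-- Characteristic coefficient `A_(F,G) = -(F̄ G_z - F_z Ḡ)/(F Ḡ - F̄ G)`. -/
def AFG (F G : Hyp → Hyp) (z : Hyp) : Hyp :=
  - hdiv (hmul (hconj (F z)) (dz G z) - hmul (dz F z) (hconj (G z))) (pairDenom F G z)

/-- Characteristic coefficient `B_(F,G) = (F G_z - F_z G)/(F Ḡ - F̄ G)`. -/
def BFG (F G : Hyp → Hyp) (z : Hyp) : Hyp :=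
  hdiv (hmul (F z) (dz G z) - hmul (dz F z) (G z)) (pairDenom F G z)

/-- A generating pair on `Ω`: twice continuously differentiable `F, G` with `Im(F̄G) ≠ 0`. -/
def IsGenPair (F G : Hyp → Hyp) (Ω : Set Hyp) : Prop :=
  ContDiffOn ℝ 2 F Ω ∧ ContDiffOn ℝ 2 G Ω ∧ ∀ z ∈ Ω, him (hmul (hconj (F z)) (G z)) ≠ 0

/-- The idempotent `e₁ = (1+j)/2`. -/
def e1 : Hyp := (1/2, 1/2)

/-- The idempotent `e₂ = (1-j)/2`. -/
def e2 : Hyp := (1/2, -1/2)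

/-- Contour integral `∮_{∂R} h dz` over the counterclockwise boundary of the rectangle
`[x₁,x₂] × [t₁,t₂]`, with hyperbolic multiplication (`dz = dx` on horizontal sides,
`dz = j dt` on vertical sides). -/
def rectContourInt (h : Hyp → Hyp) (x₁ x₂ t₁ t₂ : ℝ) : Hyp :=
  ((∫ x in x₁..x₂, h (x, t₁)) - ∫ x in x₁..x₂, h (x, t₂)) +
    hmul hj ((∫ t in t₁..t₂, h (x₂, t)) - ∫ t in t₁..t₂, h (x₁, t))

/-- Integral `∫_{[z₀,z]} h dζ` along the straight segment from `z₀` to `z`,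
with hyperbolic multiplication. -/
def segInt (h : Hyp → Hyp) (z₀ z : Hyp) : Hyp :=
  ∫ s in (0:ℝ)..1, hmul (h (z₀ + s • (z - z₀))) (z - z₀)

/-- Natural powers in 𝔻. -/
def hpow (a : Hyp) : ℕ → Hyp
  | 0 => (1, 0)
  | n + 1 => hmul a (hpow a n)

/-- Integer powers in 𝔻 (for invertible base). -/
def hzpow (a : Hyp) : ℤ → Hyp
  | Int.ofNat n => hpow a n
  | Int.negSucc n => hinv (hpow a (n + 1))

/-!
Put `P = f² (u/f)_t = f u_t - u f_t` and `Q = f² (u/f)_x = f u_x - u f_x`. The main Vekua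
equation for `u + jv` says exactly that `(f v)_x = P` and `(f v)_t = Q`. The form `P dx + Q dt`
is closed: `Q_x - P_t = f □u - u □f = 0` because `u` and `f` solve the same Klein–Gordon
equation. The function `f v + c₀` is its potential on the rectangle, obtained by integrating
along `{x₀} × [t₀, t]` and then along `[x₀, x] × {t}`; differentiating the second integral in `t`
under the integral sign and closedness give `(f v)_t = Q`. Any other solution `v'` makes
`f (v' - v)` have vanishing partial derivatives, hence constant on the rectangle. Differentiating
the first-order system once more, with symmetric mixed partials and `f_xx - f_tt = ν f`, gives the
equation for `v`.
-/

open Set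

lemma ContDiffOn.differentiableAt_of_isOpen {E F : Type*} [NormedAddCommGroup E]
    [NormedSpace ℝ E] [NormedAddCommGroup F] [NormedSpace ℝ F] {n : WithTop ℕ∞} {g : E → F}
    {Ω : Set E} {p : E} (hg : ContDiffOn ℝ n g Ω) (hΩ : IsOpen Ω) (hn : n ≠ 0) (hp : p ∈ Ω) :
    DifferentiableAt ℝ g p :=
  (hg.contDiffAt (hΩ.mem_nhds hp)).differentiableAt hn

section PartialDerivatives

variable {g h u f : Hyp → ℝ} {p : Hyp} {Ω : Set Hyp}

lemma hasDerivAt_pdx (hg : DifferentiableAt ℝ g p) :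
    HasDerivAt (fun s => g (s, p.2)) (pdx g p) p.1 :=
  (hg.comp p.1 ((hasDerivAt_id p.1).prodMk (hasDerivAt_const p.1 p.2)).differentiableAt
    ).hasDerivAt

lemma hasDerivAt_pdt (hg : DifferentiableAt ℝ g p) :
    HasDerivAt (fun s => g (p.1, s)) (pdt g p) p.2 :=
  (hg.comp p.2 ((hasDerivAt_const p.2 p.1).prodMk (hasDerivAt_id p.2)).differentiableAt
    ).hasDerivAt

lemma pdx_eq_fderiv (hg : DifferentiableAt ℝ g p) : pdx g p = fderiv ℝ g p (1, 0) :=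
  (hg.hasFDerivAt.comp_hasDerivAt p.1
    ((hasDerivAt_id p.1).prodMk (hasDerivAt_const p.1 p.2))).deriv

lemma pdt_eq_fderiv (hg : DifferentiableAt ℝ g p) : pdt g p = fderiv ℝ g p (0, 1) :=
  (hg.hasFDerivAt.comp_hasDerivAt p.2
    ((hasDerivAt_const p.2 p.1).prodMk (hasDerivAt_id p.2))).deriv

lemma pdx_congr_of_eqOn (hΩ : IsOpen Ω) (hgh : EqOn g h Ω) (hp : p ∈ Ω) :
    pdx g p = pdx h p := by
  refine Filter.EventuallyEq.deriv_eq ?_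
  have hs : IsOpen {s : ℝ | ((s, p.2) : Hyp) ∈ Ω} := hΩ.preimage (by fun_prop)
  filter_upwards [hs.mem_nhds hp] with s hs using hgh hs

lemma pdt_congr_of_eqOn (hΩ : IsOpen Ω) (hgh : EqOn g h Ω) (hp : p ∈ Ω) :
    pdt g p = pdt h p := by
  refine Filter.EventuallyEq.deriv_eq ?_
  have hs : IsOpen {s : ℝ | ((p.1, s) : Hyp) ∈ Ω} := hΩ.preimage (by fun_prop)
  filter_upwards [hs.mem_nhds hp] with s hs using hgh hs

lemma ContDiffOn.pdx {m n : WithTop ℕ∞} (hg : ContDiffOn ℝ n g Ω) (hΩ : IsOpen Ω)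
    (hmn : m + 1 ≤ n) : ContDiffOn ℝ m (pdx g) Ω :=
  ((hg.fderiv_of_isOpen hΩ hmn).clm_apply contDiffOn_const).congr fun _ hq =>
    pdx_eq_fderiv (hg.differentiableAt_of_isOpen hΩ (by rintro rfl; simp at hmn) hq)

lemma ContDiffOn.pdt {m n : WithTop ℕ∞} (hg : ContDiffOn ℝ n g Ω) (hΩ : IsOpen Ω)
    (hmn : m + 1 ≤ n) : ContDiffOn ℝ m (pdt g) Ω :=
  ((hg.fderiv_of_isOpen hΩ hmn).clm_apply contDiffOn_const).congr fun _ hq =>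
    pdt_eq_fderiv (hg.differentiableAt_of_isOpen hΩ (by rintro rfl; simp at hmn) hq)

lemma ContDiffOn.differentiableAt_pdx (hg : ContDiffOn ℝ 2 g Ω) (hΩ : IsOpen Ω) (hp : p ∈ Ω) :
    DifferentiableAt ℝ (_root_.pdx g) p :=
  (hg.pdx hΩ (m := 1) (by norm_num)).differentiableAt_of_isOpen hΩ one_ne_zero hp

lemma ContDiffOn.differentiableAt_pdt (hg : ContDiffOn ℝ 2 g Ω) (hΩ : IsOpen Ω) (hp : p ∈ Ω) :
    DifferentiableAt ℝ (_root_.pdt g) p :=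
  (hg.pdt hΩ (m := 1) (by norm_num)).differentiableAt_of_isOpen hΩ one_ne_zero hp

lemma pdx_pdt_comm (hg : ContDiffOn ℝ 2 g Ω) (hΩ : IsOpen Ω) (hp : p ∈ Ω) :
    pdx (pdt g) p = pdt (pdx g) p := by
  have hD : DifferentiableAt ℝ (fderiv ℝ g) p :=
    (hg.fderiv_of_isOpen hΩ (m := 1) (by norm_num)).differentiableAt_of_isOpen hΩ
      one_ne_zero hp
  have hpdt : EqOn (pdt g) (fun q => fderiv ℝ g q (0, 1)) Ω := fun _ hq =>
    pdt_eq_fderiv (hg.differentiableAt_of_isOpen hΩ two_ne_zero hq)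
  have hpdx : EqOn (pdx g) (fun q => fderiv ℝ g q (1, 0)) Ω := fun _ hq =>
    pdx_eq_fderiv (hg.differentiableAt_of_isOpen hΩ two_ne_zero hq)
  rw [pdx_congr_of_eqOn hΩ hpdt hp, pdt_congr_of_eqOn hΩ hpdx hp,
    pdx_eq_fderiv (hD.clm_apply (differentiableAt_const _)),
    pdt_eq_fderiv (hD.clm_apply (differentiableAt_const _)),
    fderiv_clm_apply hD (differentiableAt_const _),
    fderiv_clm_apply hD (differentiableAt_const _)]
  simpa using ((hg.contDiffAt (hΩ.mem_nhds hp)).isSymmSndFDerivAt (by simp)) (1, 0) (0, 1)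

lemma sq_mul_pdx_div (hu : DifferentiableAt ℝ u p) (hf : DifferentiableAt ℝ f p)
    (hne : f p ≠ 0) :
    f p ^ 2 * pdx (fun q => u q / f q) p = f p * pdx u p - u p * pdx f p := by
  rw [show pdx (fun q => u q / f q) p = (pdx u p * f p - u p * pdx f p) / f p ^ 2 from
    ((hasDerivAt_pdx hu).div (hasDerivAt_pdx hf) hne).deriv]
  field_simp

lemma sq_mul_pdt_div (hu : DifferentiableAt ℝ u p) (hf : DifferentiableAt ℝ f p)
    (hne : f p ≠ 0) :
    f p ^ 2 * pdt (fun q => u q / f q) p = f p * pdt u p - u p * pdt f p := by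
  rw [show pdt (fun q => u q / f q) p = (pdt u p * f p - u p * pdt f p) / f p ^ 2 from
    ((hasDerivAt_pdt hu).div (hasDerivAt_pdt hf) hne).deriv]
  field_simp

lemma pdx_sub_pdt_eq_mul_waveOp_sub (hu : ContDiffOn ℝ 2 u Ω) (hf : ContDiffOn ℝ 2 f Ω)
    (hΩ : IsOpen Ω) (hp : p ∈ Ω) :
    pdx (fun q => f q * pdx u q - u q * pdx f q) p
        - pdt (fun q => f q * pdt u q - u q * pdt f q) p
      = f p * waveOp u p - u p * waveOp f p := by
  have hu' := hu.differentiableAt_of_isOpen hΩ two_ne_zero hp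
  have hf' := hf.differentiableAt_of_isOpen hΩ two_ne_zero hp
  have hux := hu.differentiableAt_pdx hΩ hp
  have hut := hu.differentiableAt_pdt hΩ hp
  have hfx := hf.differentiableAt_pdx hΩ hp
  have hft := hf.differentiableAt_pdt hΩ hp
  have hx : pdx (fun q => f q * pdx u q - u q * pdx f q) p
      = pdx f p * pdx u p + f p * pdx (pdx u) p - (pdx u p * pdx f p + u p * pdx (pdx f) p) :=
    (((hasDerivAt_pdx hf').mul (hasDerivAt_pdx hux)).sub
      ((hasDerivAt_pdx hu').mul (hasDerivAt_pdx hfx))).deriv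
  have ht : pdt (fun q => f q * pdt u q - u q * pdt f q) p
      = pdt f p * pdt u p + f p * pdt (pdt u) p - (pdt u p * pdt f p + u p * pdt (pdt f) p) :=
    (((hasDerivAt_pdt hf').mul (hasDerivAt_pdt hut)).sub
      ((hasDerivAt_pdt hu').mul (hasDerivAt_pdt hft))).deriv
  rw [hx, ht, waveOp, waveOp]
  ring

end PartialDerivatives

section VekuaSystem

variable {u f v : Hyp → ℝ} {p : Hyp} {Ω : Set Hyp}

def vekuaPdx (u f v : Hyp → ℝ) (q : Hyp) : ℝ :=
  (f q * pdt u q - u q * pdt f q - v q * pdx f q) / f q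

def vekuaPdt (u f v : Hyp → ℝ) (q : Hyp) : ℝ :=
  (f q * pdx u q - u q * pdx f q - v q * pdt f q) / f q

lemma dzbar_eq_iff_vekua (hne : f p ≠ 0) :
    dzbar (fun q => ((u q, v q) : Hyp)) p = hmul (hdiv (rzbar f p) (f p, 0)) (hconj (u p, v p))
      ↔ pdx v p = vekuaPdx u f v p ∧ pdt v p = vekuaPdt u f v p := by
  have hinv_f : hinv (f p, 0) = (1 / f p, 0) := by
    simp only [hinv, Prod.mk.injEq]
    constructor <;> field_simp <;> ring
  simp only [dzbar, hmul, hdiv, hinv_f, hconj, rzbar, vekuaPdx, vekuaPdt, Prod.mk.injEq]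
  rw [and_comm]
  refine and_congr ?_ ?_ <;> field_simp <;> constructor <;> intro h <;> linarith

lemma hasDerivAt_vekuaPdx_of_eq_div {w : Hyp → ℝ} (hv : ∀ q, v q = w q / f q)
    (hf : DifferentiableAt ℝ f p) (hne : f p ≠ 0)
    (hw : HasDerivAt (fun s => w (s, p.2)) (f p * pdt u p - u p * pdt f p) p.1) :
    HasDerivAt (fun s => v (s, p.2)) (vekuaPdx u f v p) p.1 := by
  simp only [hv]
  refine (hw.div (hasDerivAt_pdx hf) hne).congr_deriv ?_
  rw [vekuaPdx, hv]
  field_simp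

lemma hasDerivAt_vekuaPdt_of_eq_div {w : Hyp → ℝ} (hv : ∀ q, v q = w q / f q)
    (hf : DifferentiableAt ℝ f p) (hne : f p ≠ 0)
    (hw : HasDerivAt (fun s => w (p.1, s)) (f p * pdx u p - u p * pdx f p) p.2) :
    HasDerivAt (fun s => v (p.1, s)) (vekuaPdt u f v p) p.2 := by
  simp only [hv]
  refine (hw.div (hasDerivAt_pdt hf) hne).congr_deriv ?_
  rw [vekuaPdt, hv]
  field_simp

lemma waveOp_eq_of_hasDerivAt_vekua {ν : ℝ}
    (hu : ContDiffOn ℝ 2 u Ω) (hf : ContDiffOn ℝ 2 f Ω) (hΩ : IsOpen Ω) (hp : p ∈ Ω)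
    (hne : f p ≠ 0) (hKG : waveOp f p = ν * f p)
    (hvx : ∀ q ∈ Ω, HasDerivAt (fun s => v (s, q.2)) (vekuaPdx u f v q) q.1)
    (hvt : ∀ q ∈ Ω, HasDerivAt (fun s => v (q.1, s)) (vekuaPdt u f v q) q.2) :
    waveOp v p = (-ν + 2 * (pdx f p ^ 2 - pdt f p ^ 2) / f p ^ 2) * v p := by
  have hu' := hu.differentiableAt_of_isOpen hΩ two_ne_zero hp
  have hf' := hf.differentiableAt_of_isOpen hΩ two_ne_zero hp
  have hux := hu.differentiableAt_pdx hΩ hp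
  have hut := hu.differentiableAt_pdt hΩ hp
  have hfx := hf.differentiableAt_pdx hΩ hp
  have hft := hf.differentiableAt_pdt hΩ hp
  have hxx : pdx (pdx v) p = ((pdx f p * pdt u p + f p * pdx (pdt u) p
      - (pdx u p * pdt f p + u p * pdx (pdt f) p)
      - (vekuaPdx u f v p * pdx f p + v p * pdx (pdx f) p)) * f p
      - (f p * pdt u p - u p * pdt f p - v p * pdx f p) * pdx f p) / f p ^ 2 := by
    rw [pdx_congr_of_eqOn hΩ (show EqOn (pdx v) (vekuaPdx u f v) Ω from
      fun q hq => (hvx q hq).deriv) hp]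
    exact (((((hasDerivAt_pdx hf').mul (hasDerivAt_pdx hut)).sub
      ((hasDerivAt_pdx hu').mul (hasDerivAt_pdx hft))).sub
      ((hvx p hp).mul (hasDerivAt_pdx hfx))).div (hasDerivAt_pdx hf') hne).deriv
  have htt : pdt (pdt v) p = ((pdt f p * pdx u p + f p * pdt (pdx u) p
      - (pdt u p * pdx f p + u p * pdt (pdx f) p)
      - (vekuaPdt u f v p * pdt f p + v p * pdt (pdt f) p)) * f p
      - (f p * pdx u p - u p * pdx f p - v p * pdt f p) * pdt f p) / f p ^ 2 := by
    rw [pdt_congr_of_eqOn hΩ (show EqOn (pdt v) (vekuaPdt u f v) Ω from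
      fun q hq => (hvt q hq).deriv) hp]
    exact (((((hasDerivAt_pdt hf').mul (hasDerivAt_pdt hux)).sub
      ((hasDerivAt_pdt hu').mul (hasDerivAt_pdt hfx))).sub
      ((hvt p hp).mul (hasDerivAt_pdt hft))).div (hasDerivAt_pdt hf') hne).deriv
  rw [waveOp] at hKG ⊢
  rw [hxx, htt, pdx_pdt_comm hu hΩ hp, pdx_pdt_comm hf hΩ hp, vekuaPdx, vekuaPdt]
  field_simp
  linear_combination (-(f p * v p)) * hKG

end VekuaSystem

section Rectangle

variable {a b c d x₀ t₀ : ℝ} {p : Hyp}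

lemma hasDerivAt_intervalIntegral_of_continuousOn {g : ℝ → ℝ} (hg : ContinuousOn g (Ioo a b))
    (hx₀ : x₀ ∈ Ioo a b) {x : ℝ} (hx : x ∈ Ioo a b) :
    HasDerivAt (fun s => ∫ η in x₀..s, g η) (g x) x :=
  intervalIntegral.integral_hasDerivAt_right
    ((hg.mono (ordConnected_Ioo.uIcc_subset hx₀ hx)).intervalIntegrable)
    (hg.stronglyMeasurableAtFilter isOpen_Ioo x hx) (hg.continuousAt (isOpen_Ioo.mem_nhds hx))

lemma ContinuousOn.slice_x {F : Hyp → ℝ} {S T : Set ℝ} (hF : ContinuousOn F (S ×ˢ T)) {τ : ℝ}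
    (hτ : τ ∈ T) : ContinuousOn (fun η => F (η, τ)) S :=
  hF.comp (f := fun η => ((η, τ) : Hyp)) (by fun_prop) fun _ hη => ⟨hη, hτ⟩

lemma ContinuousOn.slice_t {F : Hyp → ℝ} {S T : Set ℝ} (hF : ContinuousOn F (S ×ˢ T)) {η : ℝ}
    (hη : η ∈ S) : ContinuousOn (fun τ => F (η, τ)) T :=
  hF.comp (f := fun τ => ((η, τ) : Hyp)) (by fun_prop) fun _ hτ => ⟨hη, hτ⟩

def rectPotential (P Q : Hyp → ℝ) (x₀ t₀ : ℝ) (p : Hyp) : ℝ :=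
  (∫ η in x₀..p.1, P (η, p.2)) + ∫ ξ in t₀..p.2, Q (x₀, ξ)

lemma hasDerivAt_rectPotential_x {P Q : Hyp → ℝ} (hP : ContinuousOn P (Ioo a b ×ˢ Ioo c d))
    (hx₀ : x₀ ∈ Ioo a b) (hp : p ∈ Ioo a b ×ˢ Ioo c d) :
    HasDerivAt (fun s => rectPotential P Q x₀ t₀ (s, p.2)) (P p) p.1 :=
  (hasDerivAt_intervalIntegral_of_continuousOn (hP.slice_x hp.2) hx₀ hp.1).add_const
    (∫ ξ in t₀..p.2, Q (x₀, ξ))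

lemma hasDerivAt_intervalIntegral_slice_t {P : Hyp → ℝ}
    (hP : ContDiffOn ℝ 1 P (Ioo a b ×ˢ Ioo c d)) (hx₀ : x₀ ∈ Ioo a b)
    (hp : p ∈ Ioo a b ×ˢ Ioo c d) :
    HasDerivAt (fun τ => ∫ η in x₀..p.1, P (η, τ)) (∫ η in x₀..p.1, pdt P (η, p.2)) p.2 := by
  have hR : IsOpen (Ioo a b ×ˢ Ioo c d) := isOpen_Ioo.prod isOpen_Ioo
  have hPt : ContinuousOn (pdt P) (Ioo a b ×ˢ Ioo c d) :=
    (hP.pdt hR (m := 0) (by norm_num)).continuousOn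
  have hsub : uIcc x₀ p.1 ⊆ Ioo a b := ordConnected_Ioo.uIcc_subset hx₀ hp.1
  have hslice {F : Hyp → ℝ} (hF : ContinuousOn F (Ioo a b ×ˢ Ioo c d)) {τ : ℝ}
      (hτ : τ ∈ Ioo c d) : ContinuousOn (fun η => F (η, τ)) (uIcc x₀ p.1) :=
    (hF.slice_x hτ).mono hsub
  obtain ⟨c', hcc', hc'p⟩ := exists_between hp.2.1
  obtain ⟨d', hpd', hd'd⟩ := exists_between hp.2.2
  obtain ⟨C, hC⟩ := (isCompact_uIcc.prod isCompact_Icc).exists_bound_of_continuousOn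
    (hPt.mono (prod_mono hsub (Icc_subset_Ioo hcc' hd'd)))
  refine (intervalIntegral.hasDerivAt_integral_of_dominated_loc_of_deriv_le
    (F := fun τ η => P (η, τ)) (F' := fun τ η => pdt P (η, τ)) (Ioo_mem_nhds hc'p hpd') ?_
    (hslice hP.continuousOn hp.2).intervalIntegrable
    (((hslice hPt hp.2).mono uIoc_subset_uIcc).aestronglyMeasurable measurableSet_uIoc)
    (bound := fun _ => C) ?_ intervalIntegrable_const ?_).2
  · filter_upwards [isOpen_Ioo.mem_nhds hp.2] with τ hτ
    exact ((hslice hP.continuousOn hτ).mono uIoc_subset_uIcc).aestronglyMeasurable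
      measurableSet_uIoc
  · exact Filter.Eventually.of_forall fun η hη τ hτ =>
      hC (η, τ) ⟨uIoc_subset_uIcc hη, Ioo_subset_Icc_self hτ⟩
  · refine Filter.Eventually.of_forall fun η hη τ hτ => hasDerivAt_pdt (p := (η, τ)) ?_
    exact hP.differentiableAt_of_isOpen hR one_ne_zero
      ⟨hsub (uIoc_subset_uIcc hη), Ioo_subset_Ioo hcc'.le hd'd.le hτ⟩

lemma hasDerivAt_rectPotential_t {P Q : Hyp → ℝ} (hP : ContDiffOn ℝ 1 P (Ioo a b ×ˢ Ioo c d))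
    (hQ : ContDiffOn ℝ 1 Q (Ioo a b ×ˢ Ioo c d))
    (hPQ : ∀ q ∈ Ioo a b ×ˢ Ioo c d, pdt P q = pdx Q q)
    (hx₀ : x₀ ∈ Ioo a b) (ht₀ : t₀ ∈ Ioo c d) (hp : p ∈ Ioo a b ×ˢ Ioo c d) :
    HasDerivAt (fun s => rectPotential P Q x₀ t₀ (p.1, s)) (Q p) p.2 := by
  have hR : IsOpen (Ioo a b ×ˢ Ioo c d) := isOpen_Ioo.prod isOpen_Ioo
  have hsub : uIcc x₀ p.1 ⊆ Ioo a b := ordConnected_Ioo.uIcc_subset hx₀ hp.1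
  have hFTC : ∫ η in x₀..p.1, pdt P (η, p.2) = Q p - Q (x₀, p.2) := by
    refine intervalIntegral.integral_eq_sub_of_hasDerivAt (f := fun s => Q (s, p.2))
      (fun s hs => ?_) ?_
    · have hq : ((s, p.2) : Hyp) ∈ Ioo a b ×ˢ Ioo c d := ⟨hsub hs, hp.2⟩
      rw [hPQ _ hq]
      exact hasDerivAt_pdx (hQ.differentiableAt_of_isOpen hR one_ne_zero hq)
    · exact (((hP.pdt hR (m := 0) (by norm_num)).continuousOn.slice_x hp.2).mono
        hsub).intervalIntegrable
  have h := (hasDerivAt_intervalIntegral_slice_t hP hx₀ hp).add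
    (hasDerivAt_intervalIntegral_of_continuousOn (hQ.continuousOn.slice_t hx₀) ht₀ hp.2)
  rw [hFTC, sub_add_cancel] at h
  exact h

lemma eq_of_hasDerivAt_slices_eq_zero {g : Hyp → ℝ}
    (hx : ∀ q ∈ Ioo a b ×ˢ Ioo c d, HasDerivAt (fun s => g (s, q.2)) 0 q.1)
    (ht : ∀ q ∈ Ioo a b ×ˢ Ioo c d, HasDerivAt (fun s => g (q.1, s)) 0 q.2)
    {q : Hyp} (hp : p ∈ Ioo a b ×ˢ Ioo c d) (hq : q ∈ Ioo a b ×ˢ Ioo c d) : g p = g q := by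
  have h₁ : g (p.1, p.2) = g (q.1, p.2) :=
    isOpen_Ioo.is_const_of_deriv_eq_zero (f := fun s => g (s, p.2)) isPreconnected_Ioo
      (fun s hs => (hx (s, p.2) ⟨hs, hp.2⟩).differentiableAt.differentiableWithinAt)
      (fun s hs => (hx (s, p.2) ⟨hs, hp.2⟩).deriv) hp.1 hq.1
  have h₂ : g (q.1, p.2) = g (q.1, q.2) :=
    isOpen_Ioo.is_const_of_deriv_eq_zero (f := fun s => g (q.1, s)) isPreconnected_Ioo
      (fun s hs => (ht (q.1, s) ⟨hq.1, hs⟩).differentiableAt.differentiableWithinAt)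
      (fun s hs => (ht (q.1, s) ⟨hq.1, hs⟩).deriv) hp.2 hq.2
  exact h₁.trans h₂

lemma exists_eq_add_div_of_hasDerivAt_vekua {u f v₁ v₂ : Hyp → ℝ} {p₀ : Hyp}
    (hf : ∀ q ∈ Ioo a b ×ˢ Ioo c d, DifferentiableAt ℝ f q)
    (hne : ∀ q ∈ Ioo a b ×ˢ Ioo c d, f q ≠ 0)
    (h₁x : ∀ q ∈ Ioo a b ×ˢ Ioo c d, HasDerivAt (fun s => v₁ (s, q.2)) (vekuaPdx u f v₁ q) q.1)
    (h₁t : ∀ q ∈ Ioo a b ×ˢ Ioo c d, HasDerivAt (fun s => v₁ (q.1, s)) (vekuaPdt u f v₁ q) q.2)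
    (h₂x : ∀ q ∈ Ioo a b ×ˢ Ioo c d, HasDerivAt (fun s => v₂ (s, q.2)) (vekuaPdx u f v₂ q) q.1)
    (h₂t : ∀ q ∈ Ioo a b ×ˢ Ioo c d, HasDerivAt (fun s => v₂ (q.1, s)) (vekuaPdt u f v₂ q) q.2)
    (hp₀ : p₀ ∈ Ioo a b ×ˢ Ioo c d) :
    ∃ c' : ℝ, ∀ p ∈ Ioo a b ×ˢ Ioo c d, v₂ p = v₁ p + c' / f p := by
  have hx : ∀ q ∈ Ioo a b ×ˢ Ioo c d,
      HasDerivAt (fun s => f (s, q.2) * (v₂ (s, q.2) - v₁ (s, q.2))) 0 q.1 := fun q hq =>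
    ((hasDerivAt_pdx (hf q hq)).mul ((h₂x q hq).sub (h₁x q hq))).congr_deriv <| by
      simp only [Pi.sub_apply, vekuaPdx]; field_simp [hne q hq]; ring
  have ht : ∀ q ∈ Ioo a b ×ˢ Ioo c d,
      HasDerivAt (fun s => f (q.1, s) * (v₂ (q.1, s) - v₁ (q.1, s))) 0 q.2 := fun q hq =>
    ((hasDerivAt_pdt (hf q hq)).mul ((h₂t q hq).sub (h₁t q hq))).congr_deriv <| by
      simp only [Pi.sub_apply, vekuaPdt]; field_simp [hne q hq]; ring
  refine ⟨f p₀ * (v₂ p₀ - v₁ p₀), fun p hp => ?_⟩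
  rw [← eq_of_hasDerivAt_slices_eq_zero (g := fun q => f q * (v₂ q - v₁ q)) hx ht hp hp₀]
  field_simp [hne p hp]
  ring

end Rectangle

section ConjugateForm

variable {a b c d x₀ t₀ : ℝ} {u f : Hyp → ℝ}

-- `conjugateFormX u f dx + conjugateFormT u f dt` is `d (f v)` for the conjugate `v` of `u`.
def conjugateFormX (u f : Hyp → ℝ) (q : Hyp) : ℝ := f q ^ 2 * pdt (fun q => u q / f q) q

def conjugateFormT (u f : Hyp → ℝ) (q : Hyp) : ℝ := f q ^ 2 * pdx (fun q => u q / f q) q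

lemma ContDiffOn.conjugateFormX {Ω : Set Hyp} (hu : ContDiffOn ℝ 2 u Ω) (hf : ContDiffOn ℝ 2 f Ω)
    (hne : ∀ q ∈ Ω, f q ≠ 0) (hΩ : IsOpen Ω) : ContDiffOn ℝ 1 (conjugateFormX u f) Ω :=
  ((hf.pow 2).of_le (by norm_num)).mul ((hu.div hf hne).pdt hΩ (by norm_num))

lemma ContDiffOn.conjugateFormT {Ω : Set Hyp} (hu : ContDiffOn ℝ 2 u Ω) (hf : ContDiffOn ℝ 2 f Ω)
    (hne : ∀ q ∈ Ω, f q ≠ 0) (hΩ : IsOpen Ω) : ContDiffOn ℝ 1 (conjugateFormT u f) Ω :=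
  ((hf.pow 2).of_le (by norm_num)).mul ((hu.div hf hne).pdx hΩ (by norm_num))

lemma pdt_conjugateFormX {Ω : Set Hyp} {p : Hyp} {ν : ℝ} (hu : ContDiffOn ℝ 2 u Ω)
    (hf : ContDiffOn ℝ 2 f Ω) (hne : ∀ q ∈ Ω, f q ≠ 0) (hΩ : IsOpen Ω) (hp : p ∈ Ω)
    (hKG : waveOp f p = ν * f p) (huKG : waveOp u p = ν * u p) :
    pdt (conjugateFormX u f) p = pdx (conjugateFormT u f) p := by
  have hX : EqOn (conjugateFormX u f) (fun q => f q * pdt u q - u q * pdt f q) Ω := fun q hq =>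
    sq_mul_pdt_div (hu.differentiableAt_of_isOpen hΩ two_ne_zero hq)
      (hf.differentiableAt_of_isOpen hΩ two_ne_zero hq) (hne q hq)
  have hT : EqOn (conjugateFormT u f) (fun q => f q * pdx u q - u q * pdx f q) Ω := fun q hq =>
    sq_mul_pdx_div (hu.differentiableAt_of_isOpen hΩ two_ne_zero hq)
      (hf.differentiableAt_of_isOpen hΩ two_ne_zero hq) (hne q hq)
  rw [pdt_congr_of_eqOn hΩ hX hp, pdx_congr_of_eqOn hΩ hT hp, ← sub_eq_zero, ← neg_sub,
    pdx_sub_pdt_eq_mul_waveOp_sub hu hf hΩ hp, huKG, hKG]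
  ring

lemma hasDerivAt_vekua_of_eq_rectPotential_div {ν : Hyp → ℝ} {v : Hyp → ℝ} {c₀ : ℝ} {p : Hyp}
    (hu : ContDiffOn ℝ 2 u (Ioo a b ×ˢ Ioo c d)) (hf : ContDiffOn ℝ 2 f (Ioo a b ×ˢ Ioo c d))
    (hne : ∀ q ∈ Ioo a b ×ˢ Ioo c d, f q ≠ 0)
    (hKG : ∀ q ∈ Ioo a b ×ˢ Ioo c d, waveOp f q = ν q * f q)
    (huKG : ∀ q ∈ Ioo a b ×ˢ Ioo c d, waveOp u q = ν q * u q)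
    (hx₀ : x₀ ∈ Ioo a b) (ht₀ : t₀ ∈ Ioo c d)
    (hv : ∀ q, v q =
      (rectPotential (conjugateFormX u f) (conjugateFormT u f) x₀ t₀ q - c₀) / f q)
    (hp : p ∈ Ioo a b ×ˢ Ioo c d) :
    HasDerivAt (fun s => v (s, p.2)) (vekuaPdx u f v p) p.1 ∧
      HasDerivAt (fun s => v (p.1, s)) (vekuaPdt u f v p) p.2 := by
  have hR : IsOpen (Ioo a b ×ˢ Ioo c d) := isOpen_Ioo.prod isOpen_Ioo
  have hu' := hu.differentiableAt_of_isOpen hR two_ne_zero hp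
  have hf' := hf.differentiableAt_of_isOpen hR two_ne_zero hp
  have hX := hu.conjugateFormX hf hne hR
  have hT := hu.conjugateFormT hf hne hR
  have hclosed : ∀ q ∈ Ioo a b ×ˢ Ioo c d,
      pdt (conjugateFormX u f) q = pdx (conjugateFormT u f) q := fun q hq =>
    pdt_conjugateFormX hu hf hne hR hq (hKG q hq) (huKG q hq)
  exact ⟨hasDerivAt_vekuaPdx_of_eq_div hv hf' (hne p hp)
      (((hasDerivAt_rectPotential_x hX.continuousOn hx₀ hp).sub_const c₀).congr_deriv
        (sq_mul_pdt_div hu' hf' (hne p hp))),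
    hasDerivAt_vekuaPdt_of_eq_div hv hf' (hne p hp)
      (((hasDerivAt_rectPotential_t hX hT hclosed hx₀ ht₀ hp).sub_const c₀).congr_deriv
        (sq_mul_pdx_div hu' hf' (hne p hp)))⟩

end ConjugateForm

/-- given a C² solution `u` of `□u = νu` on an open rectangle `Ω`, with
`Φ₁ + jΦ₂ = j·f²·∂_z̄(u/f)` and
`v = −(1/f)·[2(∫_{x₀}^{x} Φ₁(η,t) dη − ∫_{t₀}^{t} Φ₂(x₀,ξ) dξ) + c]`, the function
`W = u + jv` solves the main Vekua equation `W_z̄ = (f_z̄/f)W̄` on `Ω` and `v` solves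
`□v = ηv` with `η = −ν + 2(f_x² − f_t²)/f²`; moreover `v` is unique up to an additive
term `c'/f`. -/
theorem conjugate_metaharmonic_v (a b c d x₀ t₀ : ℝ) (Ω : Set Hyp)
    (hΩ : Ω = Set.Ioo a b ×ˢ Set.Ioo c d) (hz₀ : ((x₀, t₀) : Hyp) ∈ Ω)
    (ν f : Hyp → ℝ) (hf : ContDiffOn ℝ 2 f Ω) (hfpos : ∀ p ∈ Ω, 0 < f p)
    (hKG : ∀ p ∈ Ω, waveOp f p = ν p * f p)
    (u : Hyp → ℝ) (hu : ContDiffOn ℝ 2 u Ω)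
    (huKG : ∀ p ∈ Ω, waveOp u p = ν p * u p)
    (Φ₁ Φ₂ : Hyp → ℝ)
    (hΦ₁ : ∀ p, Φ₁ p = -(f p ^ 2 / 2) * pdt (fun q => u q / f q) p)
    (hΦ₂ : ∀ p, Φ₂ p = (f p ^ 2 / 2) * pdx (fun q => u q / f q) p)
    (c₀ : ℝ) (v : Hyp → ℝ)
    (hv : ∀ p : Hyp, v p = -(1 / f p) *
      (2 * ((∫ η in x₀..p.1, Φ₁ (η, p.2)) - ∫ ξ in t₀..p.2, Φ₂ (x₀, ξ)) + c₀)) :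
    (∀ p ∈ Ω, dzbar (fun q => ((u q, v q) : Hyp)) p =
      hmul (hdiv (rzbar f p) (f p, 0)) (hconj (u p, v p))) ∧
    (∀ p ∈ Ω, waveOp v p =
      (-ν p + 2 * ((pdx f p) ^ 2 - (pdt f p) ^ 2) / (f p) ^ 2) * v p) ∧
    (∀ v' : Hyp → ℝ, ContDiffOn ℝ 1 v' Ω →
      (∀ p ∈ Ω, dzbar (fun q => ((u q, v' q) : Hyp)) p =
        hmul (hdiv (rzbar f p) (f p, 0)) (hconj (u p, v' p))) →
      ∃ c' : ℝ, ∀ p ∈ Ω, v' p = v p + c' / f p) := by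
  subst hΩ
  have hR : IsOpen (Ioo a b ×ˢ Ioo c d) := isOpen_Ioo.prod isOpen_Ioo
  have hne : ∀ p ∈ Ioo a b ×ˢ Ioo c d, f p ≠ 0 := fun p hp => (hfpos p hp).ne'
  have hvW : ∀ q, v q =
      (rectPotential (conjugateFormX u f) (conjugateFormT u f) x₀ t₀ q - c₀) / f q := by
    have hΦ₁X : ∀ p, Φ₁ p = -(1 / 2) * conjugateFormX u f p := fun p => by
      rw [hΦ₁, conjugateFormX]; ring
    have hΦ₂T : ∀ p, Φ₂ p = 1 / 2 * conjugateFormT u f p := fun p => by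
      rw [hΦ₂, conjugateFormT]; ring
    intro q
    simp only [hv, rectPotential, hΦ₁X, hΦ₂T, intervalIntegral.integral_const_mul]
    ring
  have hvek := fun p (hp : p ∈ Ioo a b ×ˢ Ioo c d) =>
    hasDerivAt_vekua_of_eq_rectPotential_div hu hf hne hKG huKG hz₀.1 hz₀.2 hvW hp
  refine ⟨fun p hp => (dzbar_eq_iff_vekua (hne p hp)).2
      ⟨(hvek p hp).1.deriv, (hvek p hp).2.deriv⟩,
    fun p hp => waveOp_eq_of_hasDerivAt_vekua hu hf hR hp (hne p hp) (hKG p hp)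
      (fun q hq => (hvek q hq).1) (fun q hq => (hvek q hq).2),
    fun v' hv' hvek' => ?_⟩
  have hdv' : ∀ p ∈ Ioo a b ×ˢ Ioo c d, DifferentiableAt ℝ v' p :=
    fun p hp => hv'.differentiableAt_of_isOpen hR one_ne_zero hp
  exact exists_eq_add_div_of_hasDerivAt_vekua
    (fun p hp => hf.differentiableAt_of_isOpen hR two_ne_zero hp) hne
    (fun p hp => (hvek p hp).1) (fun p hp => (hvek p hp).2)
    (fun p hp => (hasDerivAt_pdx (hdv' p hp)).congr_deriv
      ((dzbar_eq_iff_vekua (hne p hp)).1 (hvek' p hp)).1)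
    (fun p hp => (hasDerivAt_pdt (hdv' p hp)).congr_deriv
      ((dzbar_eq_iff_vekua (hne p hp)).1 (hvek' p hp)).2) hz₀
end
end

section
/- Let (F,G) be a generating pair on an open set Ω ⊆ 𝔻, let φ, ψ : Ω → ℝ be continuously differentiable, and set w = φF + ψG. Then w satisfies the hyperbolic Vekua equation w_z̄ = a_(F,G)w + b_(F,G)w̄ on Ω if and only if φ_z̄·F + ψ_z̄·G = 0 on Ω, where for a real function φ, φ_z̄ = ½(φ_x − jφ_t). -/
noncomputable section

open Filter Topology MeasureTheory

/-!
By the Leibniz rule, `w_z̄ = (φ_z̄ F + ψ_z̄ G) + (φ F_z̄ + ψ G_z̄)`. The characteristic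
coefficients are exactly the solution of the linear system saying that `F` and `G` themselves
solve `u_z̄ = a u + b ū`, and the right-hand side of that equation is ℝ-linear in `u`, so
`a w + b w̄ = φ F_z̄ + ψ G_z̄`. Hence the Vekua equation for `w` holds exactly where
`φ_z̄ F + ψ_z̄ G` vanishes.
-/

lemma pairDenom_eq (F G : Hyp → Hyp) (z : Hyp) :
    pairDenom F G z = (0, -2 * him (hmul (hconj (F z)) (G z))) := by
  ext <;> simp only [pairDenom, him, hmul, hconj, Prod.fst_sub, Prod.snd_sub] <;> ring

lemma hinv_pairDenom (F G : Hyp → Hyp) (z : Hyp) :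
    hinv (pairDenom F G z) = (0, (-2 * him (hmul (hconj (F z)) (G z)))⁻¹) := by
  rw [pairDenom_eq]
  ext <;> simp only [hinv]
  · exact zero_div _
  · simp only [sq, zero_mul, zero_sub, neg_div_neg_eq, div_self_mul_self']

-- Cramer's rule: `a F + b F̄ = (F_z̄ Ḡ F - F_z̄ G F̄) / (F Ḡ - F̄ G) = F_z̄`, the `G_z̄` terms cancel.
lemma hmul_aFG_add_hmul_bFG_hconj_left {F G : Hyp → Hyp} {z : Hyp}
    (h : him (hmul (hconj (F z)) (G z)) ≠ 0) :
    hmul (aFG F G z) (F z) + hmul (bFG F G z) (hconj (F z)) = dzbar F z := by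
  simp only [aFG, bFG, hdiv, hinv_pairDenom]
  simp only [him, hmul, hconj, neg_mul, ← sub_eq_add_neg] at h ⊢
  ext <;> simp only [Prod.fst_add, Prod.snd_add, Prod.fst_neg, Prod.snd_neg, Prod.fst_sub,
    Prod.snd_sub] <;> field_simp <;> ring

lemma hmul_aFG_add_hmul_bFG_hconj_right {F G : Hyp → Hyp} {z : Hyp}
    (h : him (hmul (hconj (F z)) (G z)) ≠ 0) :
    hmul (aFG F G z) (G z) + hmul (bFG F G z) (hconj (G z)) = dzbar G z := by
  simp only [aFG, bFG, hdiv, hinv_pairDenom]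
  simp only [him, hmul, hconj, neg_mul, ← sub_eq_add_neg] at h ⊢
  ext <;> simp only [Prod.fst_add, Prod.snd_add, Prod.fst_neg, Prod.snd_neg, Prod.fst_sub,
    Prod.snd_sub] <;> field_simp <;> ring

lemma hmul_add_hmul_hconj_smul_add_smul (a b u v : Hyp) (c d : ℝ) :
    hmul a (c • u + d • v) + hmul b (hconj (c • u + d • v)) =
      c • (hmul a u + hmul b (hconj u)) + d • (hmul a v + hmul b (hconj v)) := by
  ext <;> simp only [hmul, hconj, Prod.fst_add, Prod.snd_add, Prod.smul_fst, Prod.smul_snd,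
    smul_eq_mul] <;> ring

section PartialDerivatives

variable {f g : Hyp → ℝ} {p : Hyp}

lemma DifferentiableAt.comp_prodMk_const (hg : DifferentiableAt ℝ g p) :
    DifferentiableAt ℝ (fun s : ℝ => g (s, p.2)) p.1 :=
  hg.comp p.1 (differentiableAt_id.prodMk (differentiableAt_const _))

lemma DifferentiableAt.comp_const_prodMk (hg : DifferentiableAt ℝ g p) :
    DifferentiableAt ℝ (fun s : ℝ => g (p.1, s)) p.2 :=
  hg.comp p.2 ((differentiableAt_const _).prodMk differentiableAt_id)

lemma pdx_add (hf : DifferentiableAt ℝ f p) (hg : DifferentiableAt ℝ g p) :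
    pdx (fun q => f q + g q) p = pdx f p + pdx g p :=
  deriv_add hf.comp_prodMk_const hg.comp_prodMk_const

lemma pdt_add (hf : DifferentiableAt ℝ f p) (hg : DifferentiableAt ℝ g p) :
    pdt (fun q => f q + g q) p = pdt f p + pdt g p :=
  deriv_add hf.comp_const_prodMk hg.comp_const_prodMk

lemma pdx_mul (hf : DifferentiableAt ℝ f p) (hg : DifferentiableAt ℝ g p) :
    pdx (fun q => f q * g q) p = pdx f p * g p + f p * pdx g p :=
  deriv_mul hf.comp_prodMk_const hg.comp_prodMk_const

lemma pdt_mul (hf : DifferentiableAt ℝ f p) (hg : DifferentiableAt ℝ g p) :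
    pdt (fun q => f q * g q) p = pdt f p * g p + f p * pdt g p :=
  deriv_mul hf.comp_const_prodMk hg.comp_const_prodMk

end PartialDerivatives

section Wirtinger

variable {F G : Hyp → Hyp} {φ : Hyp → ℝ} {z : Hyp}

lemma dzbar_add (hF : DifferentiableAt ℝ F z) (hG : DifferentiableAt ℝ G z) :
    dzbar (fun q => F q + G q) z = dzbar F z + dzbar G z := by
  simp only [dzbar, Prod.fst_add, Prod.snd_add, pdx_add hF.fst hG.fst, pdx_add hF.snd hG.snd,
    pdt_add hF.fst hG.fst, pdt_add hF.snd hG.snd]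
  ext <;> simp only [Prod.fst_add, Prod.snd_add] <;> ring

lemma dzbar_smul (hφ : DifferentiableAt ℝ φ z) (hF : DifferentiableAt ℝ F z) :
    dzbar (fun q => φ q • F q) z = hmul (rzbar φ z) (F z) + φ z • dzbar F z := by
  simp only [dzbar, rzbar, hmul, Prod.smul_fst, Prod.smul_snd, smul_eq_mul, pdx_mul hφ hF.fst,
    pdx_mul hφ hF.snd, pdt_mul hφ hF.fst, pdt_mul hφ hF.snd]
  ext <;> simp only [Prod.fst_add, Prod.snd_add, Prod.smul_fst, Prod.smul_snd, smul_eq_mul] <;>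
    ring

end Wirtinger

/-- for a generating pair `(F,G)` on an open `Ω` and C¹ real functions
`φ, ψ`, the function `w = φF + ψG` satisfies the hyperbolic Vekua equation
`w_z̄ = a_(F,G)w + b_(F,G)w̄` on `Ω` iff `φ_z̄·F + ψ_z̄·G = 0` on `Ω`. -/
theorem vekua_iff_second_kind (Ω : Set Hyp) (hΩ : IsOpen Ω) (F G : Hyp → Hyp)
    (hFG : IsGenPair F G Ω)
    (φ ψ : Hyp → ℝ) (hφ : ContDiffOn ℝ 1 φ Ω) (hψ : ContDiffOn ℝ 1 ψ Ω)
    (w : Hyp → Hyp) (hw : ∀ z, w z = φ z • F z + ψ z • G z) :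
    (∀ z ∈ Ω, dzbar w z = hmul (aFG F G z) (w z) + hmul (bFG F G z) (hconj (w z))) ↔
    (∀ z ∈ Ω, hmul (rzbar φ z) (F z) + hmul (rzbar ψ z) (G z) = 0) := by
  obtain ⟨hF, hG, hFG⟩ := hFG
  refine forall₂_congr fun z hz => ?_
  have hmem : Ω ∈ 𝓝 z := hΩ.mem_nhds hz
  have hφz := (hφ.contDiffAt hmem).differentiableAt one_ne_zero
  have hψz := (hψ.contDiffAt hmem).differentiableAt one_ne_zero
  have hFz := (hF.contDiffAt hmem).differentiableAt two_ne_zero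
  have hGz := (hG.contDiffAt hmem).differentiableAt two_ne_zero
  have hφF : DifferentiableAt ℝ (fun q => φ q • F q) z := hφz.smul hFz
  have hψG : DifferentiableAt ℝ (fun q => ψ q • G q) z := hψz.smul hGz
  rw [hw z, funext hw, dzbar_add hφF hψG, dzbar_smul hφz hFz, dzbar_smul hψz hGz,
    hmul_add_hmul_hconj_smul_add_smul, hmul_aFG_add_hmul_bFG_hconj_left (hFG z hz),
    hmul_aFG_add_hmul_bFG_hconj_right (hFG z hz), add_add_add_comm, add_eq_right]
end
end
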